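/- arXiv:1301.0137 — 2 statements merged into one kernel-verified Lean document; each statement's English description precedes it below -/
import Mathlib

section
/- The Gevrey–Sobolev class is a Banach algebra: if ∑_j |u_j|²(1+|j|²)^p e^{2τ|j'|} < ∞ and ∑_j |v_j|²(1+|j|²)^p e^{2τ|j'|} < ∞ with p > n/2, then the convolution w_j = ∑_k u_k v_{j−k} satisfies ∑_j |w_j|²(1+|j|²)^p e^{2τ|j'|} ≤ C₀² (∑_j |u_j|²(1+|j|²)^p e^{2τ|j'|}) (∑_j |v_j|²(1+|j|²)^p e^{2τ|j'|}), where C₀ = 2^p (2 ∑_{j∈ℤ^n} (1+|j|²)^{−p})^{1/2}. -/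
open Real

-- aux: rpow split inequality
lemma rpow_split {p x y z : ℝ} (hp : 0 ≤ p) (hx : 0 < x) (hy : 0 < y) (hz : 0 ≤ z)
    (h : z ≤ 2*(x+y)) : z ^ p ≤ 2 ^ (2*p) * (x ^ p + y ^ p) := by
  have h1 : z ^ p ≤ (2*(x+y)) ^ p := Real.rpow_le_rpow hz h hp
  have h2 : (2*(x+y)) ^ p = 2 ^ p * (x+y) ^ p := Real.mul_rpow (by norm_num) (by positivity)
  have h3 : (x+y) ^ p ≤ (2 * max x y) ^ p := by
    refine Real.rpow_le_rpow (by positivity) ?_ hp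
    rcases le_total x y with hxy | hxy
    · simp [max_eq_right hxy]; linarith
    · simp [max_eq_left hxy]; linarith
  have h4 : (2 * max x y) ^ p = 2 ^ p * (max x y) ^ p :=
    Real.mul_rpow (by norm_num) (by positivity)
  have h5 : (max x y) ^ p ≤ x ^ p + y ^ p := by
    rcases max_cases x y with ⟨he, _⟩ | ⟨he, _⟩ <;> rw [he]
    · nlinarith [Real.rpow_nonneg hy.le p]
    · nlinarith [Real.rpow_nonneg hx.le p]
  have h6 : (2:ℝ) ^ p * 2 ^ p = 2 ^ (2*p) := by
    rw [← Real.rpow_add (by norm_num)]; ring_nf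
  calc z ^ p ≤ 2 ^ p * (x+y) ^ p := h2 ▸ h1
    _ ≤ 2 ^ p * (2 ^ p * (max x y) ^ p) := by
        refine mul_le_mul_of_nonneg_left (h4 ▸ h3) (Real.rpow_nonneg (by norm_num) p)
    _ ≤ 2 ^ p * (2 ^ p * (x ^ p + y ^ p)) := by
        refine mul_le_mul_of_nonneg_left
          (mul_le_mul_of_nonneg_left h5 (Real.rpow_nonneg (by norm_num) p))
          (Real.rpow_nonneg (by norm_num) p)
    _ = 2 ^ (2*p) * (x ^ p + y ^ p) := by rw [← mul_assoc, h6]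

lemma sum1d {q : ℝ} (hq : 1/2 < q) : Summable fun t : ℤ => ((1:ℝ) + (t:ℝ)^2) ^ (-q) := by
  have h1 : Summable fun t : ℤ => |(t:ℝ)| ^ (-(2*q)) :=
    Real.summable_abs_int_rpow (by linarith)
  have h2 : Summable fun t : ℤ => (if t = 0 then (1:ℝ) else 0) :=
    summable_of_ne_finset_zero (s := {0}) (by intro t ht; simp at ht; simp [ht])
  refine Summable.of_nonneg_of_le (fun t => Real.rpow_nonneg (by positivity) _)
    (fun t => ?_) (h1.add h2)
  by_cases ht : t = 0
  · simp [ht]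
    exact Real.rpow_nonneg le_rfl _
  · have ht2 : (1:ℝ) ≤ (t:ℝ)^2 := by
      have h3 : (1:ℤ) ≤ |t| := Int.one_le_abs (by simpa using ht)
      have : (1:ℤ) ≤ t^2 := by nlinarith [sq_abs t]
      exact_mod_cast this
    have hb : ((1:ℝ) + (t:ℝ)^2) ^ (-q) ≤ ((t:ℝ)^2) ^ (-q) :=
      Real.rpow_le_rpow_of_nonpos (by positivity) (by linarith) (by linarith)
    have he : |(t:ℝ)| ^ (-(2*q)) = ((t:ℝ)^2) ^ (-q) := by
      rw [show (-(2*q)) = 2 * (-q) by ring, Real.rpow_mul (abs_nonneg _),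
        Real.rpow_two, sq_abs]
    simp only [if_neg ht, he]
    simpa using hb

lemma sumPi (g : ℤ → ℝ) (hg0 : ∀ t, 0 ≤ g t) (hg : Summable g) :
    ∀ k : ℕ, Summable fun j : Fin k → ℤ => ∏ i, g (j i) := by
  intro k
  induction k with
  | zero => exact summable_of_finite_support (Set.toFinite _)
  | succ k ih =>
    have h := Summable.mul_of_nonneg hg ih (fun t => hg0 t)
      (fun j => Finset.prod_nonneg fun i _ => hg0 _)
    rw [← (Fin.consEquiv (fun _ : Fin (k+1) => ℤ)).summable_iff]
    convert h using 1
    funext x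
    simp [Fin.consEquiv, Fin.prod_univ_succ]

lemma sumLattice (n : ℕ) (hn : 1 ≤ n) {p : ℝ} (hp : (n:ℝ)/2 < p) :
    Summable fun j : Fin n → ℤ => ((1:ℝ) + ∑ i, ((j i : ℤ):ℝ)^2) ^ (-p) := by
  set q : ℝ := p / n with hq
  have hn0 : (0:ℝ) < n := by exact_mod_cast hn
  have hq2 : 1/2 < q := by rw [hq]; rw [lt_div_iff₀ hn0]; linarith
  have hgs := sumPi (fun t => ((1:ℝ) + (t:ℝ)^2) ^ (-q))
    (fun t => Real.rpow_nonneg (by positivity) _) (sum1d hq2) n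
  refine Summable.of_nonneg_of_le (fun j => Real.rpow_nonneg (by positivity) _)
    (fun j => ?_) hgs
  have h1 : ∀ i : Fin n, (0:ℝ) < 1 + ((j i : ℤ):ℝ)^2 := fun i => by positivity
  have hS : (0:ℝ) < 1 + ∑ i, ((j i : ℤ):ℝ)^2 := by positivity
  have hprod : (∏ i, ((1:ℝ) + ((j i : ℤ):ℝ)^2)) ≤ (1 + ∑ i, ((j i : ℤ):ℝ)^2) ^ (n:ℕ) := by
    rw [show ((1:ℝ) + ∑ i, ((j i : ℤ):ℝ)^2) ^ (n:ℕ) = ∏ _i : Fin n, (1 + ∑ i, ((j i : ℤ):ℝ)^2) by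
      rw [Finset.prod_const, Finset.card_univ, Fintype.card_fin]]
    refine Finset.prod_le_prod (fun i _ => (h1 i).le) (fun i _ => ?_)
    have h2 : ((j i : ℤ):ℝ)^2 ≤ ∑ x, ((j x : ℤ):ℝ)^2 :=
      Finset.single_le_sum (f := fun i => ((j i : ℤ):ℝ)^2)
        (fun i _ => by positivity) (Finset.mem_univ i)
    linarith
  calc ((1:ℝ) + ∑ i, ((j i : ℤ):ℝ)^2) ^ (-p)
      = ((1 + ∑ i, ((j i : ℤ):ℝ)^2) ^ (n:ℕ)) ^ (-q) := by
        rw [← Real.rpow_natCast (1 + ∑ i, ((j i : ℤ):ℝ)^2) n, ← Real.rpow_mul hS.le]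
        congr 1
        rw [hq]
        field_simp
    _ ≤ (∏ i, ((1:ℝ) + ((j i : ℤ):ℝ)^2)) ^ (-q) := by
        refine Real.rpow_le_rpow_of_nonpos (Finset.prod_pos fun i _ => h1 i) hprod
          (by linarith)
    _ = ∏ i, ((1:ℝ) + ((j i : ℤ):ℝ)^2) ^ (-q) := by
        rw [← Real.finset_prod_rpow _ _ (fun i _ => (h1 i).le)]

lemma tsum_CS {ι : Type*} (f g : ι → ℝ) (hf : ∀ i, 0 ≤ f i) (hg : ∀ i, 0 ≤ g i)
    (hf2 : Summable fun i => f i ^ 2) (hg2 : Summable fun i => g i ^ 2)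
    (hfg : Summable fun i => f i * g i) :
    (∑' i, f i * g i) ^ 2 ≤ (∑' i, f i ^ 2) * (∑' i, g i ^ 2) := by
  set P := ∑' i, f i ^ 2 with hP
  set Q := ∑' i, g i ^ 2 with hQ
  have hP0 : 0 ≤ P := tsum_nonneg fun i => sq_nonneg _
  have hQ0 : 0 ≤ Q := tsum_nonneg fun i => sq_nonneg _
  have key : (∑' i, f i * g i) ≤ Real.sqrt P * Real.sqrt Q := by
    refine Summable.tsum_le_of_sum_le hfg fun s => ?_
    have h1 : (∑ i ∈ s, f i * g i) ^ 2 ≤ (∑ i ∈ s, f i ^ 2) * ∑ i ∈ s, g i ^ 2 :=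
      Finset.sum_mul_sq_le_sq_mul_sq s f g
    have h2 : (∑ i ∈ s, f i ^ 2) ≤ P := Summable.sum_le_tsum s (fun i _ => sq_nonneg _) hf2
    have h3 : (∑ i ∈ s, g i ^ 2) ≤ Q := Summable.sum_le_tsum s (fun i _ => sq_nonneg _) hg2
    have h4 : (∑ i ∈ s, f i * g i) ^ 2 ≤ P * Q := by
      refine h1.trans (mul_le_mul h2 h3 (Finset.sum_nonneg fun i _ => sq_nonneg _) hP0)
    have h5 : 0 ≤ ∑ i ∈ s, f i * g i :=
      Finset.sum_nonneg fun i _ => mul_nonneg (hf i) (hg i)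
    rw [← Real.sqrt_mul hP0]
    exact (Real.le_sqrt h5 (mul_nonneg hP0 hQ0)).2 h4
  calc (∑' i, f i * g i) ^ 2 ≤ (Real.sqrt P * Real.sqrt Q) ^ 2 := by
        refine pow_le_pow_left₀ (tsum_nonneg fun i => mul_nonneg (hf i) (hg i)) key 2
    _ = P * Q := by rw [mul_pow, Real.sq_sqrt hP0, Real.sq_sqrt hQ0]

set_option maxHeartbeats 1000000 in
theorem gevrey_sobolev_banach_algebra (n m : ℕ) (hm1 : 1 ≤ m) (hm : m ≤ n)
    (p τ : ℝ) (hp : p > n / 2) (hτ : 0 ≤ τ) (u v : (Fin n → ℤ) → ℂ)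
    (N : (Fin n → ℤ) → ℝ) (hN : ∀ j, N j = Real.sqrt (∑ i, ((j i : ℤ) : ℝ) ^ 2))
    (N' : (Fin n → ℤ) → ℝ)
    (hN' : ∀ j, N' j = Real.sqrt (∑ i : Fin m, ((j (Fin.castLE hm i) : ℤ) : ℝ) ^ 2))
    (hu : Summable fun j => ‖u j‖ ^ 2 * (1 + N j ^ 2) ^ p * Real.exp (2 * τ * N' j))
    (hv : Summable fun j => ‖v j‖ ^ 2 * (1 + N j ^ 2) ^ p * Real.exp (2 * τ * N' j))
    (w : (Fin n → ℤ) → ℂ) (hw : ∀ j, w j = ∑' k : Fin n → ℤ, u k * v (j - k))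
    (C₀ : ℝ) (hC₀ : C₀ = 2 ^ p * (2 * ∑' j : Fin n → ℤ, (1 + N j ^ 2) ^ (-p)) ^ ((1 : ℝ) / 2)) :
    (Summable fun j => ‖w j‖ ^ 2 * (1 + N j ^ 2) ^ p * Real.exp (2 * τ * N' j)) ∧
      (∑' j : Fin n → ℤ, ‖w j‖ ^ 2 * (1 + N j ^ 2) ^ p * Real.exp (2 * τ * N' j)) ≤
        C₀ ^ 2 * (∑' j : Fin n → ℤ, ‖u j‖ ^ 2 * (1 + N j ^ 2) ^ p * Real.exp (2 * τ * N' j)) *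
          (∑' j : Fin n → ℤ, ‖v j‖ ^ 2 * (1 + N j ^ 2) ^ p * Real.exp (2 * τ * N' j)) := by
  classical
  have hn1 : 1 ≤ n := hm1.trans hm
  have hp0 : 0 < p := by
    have h1 : (1:ℝ) ≤ (n:ℝ) := by exact_mod_cast hn1
    linarith
  -- basic facts about N, N'
  have hNsq : ∀ j, N j ^ 2 = ∑ i, ((j i : ℤ) : ℝ) ^ 2 := fun j => by
    rw [hN]; exact Real.sq_sqrt (by positivity)
  have hN0 : ∀ j, 0 ≤ N j := fun j => by rw [hN]; exact Real.sqrt_nonneg _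
  have hN'0 : ∀ j, 0 ≤ N' j := fun j => by rw [hN']; exact Real.sqrt_nonneg _
  have hpos : ∀ j, (0:ℝ) < 1 + N j ^ 2 := fun j => by nlinarith [sq_nonneg (N j)]
  have hone : ∀ j, (1:ℝ) ≤ 1 + N j ^ 2 := fun j => by nlinarith [sq_nonneg (N j)]
  -- triangle inequalities via EuclideanSpace
  have hNtri : ∀ a b, N (a + b) ≤ N a + N b := by
    have keyN : ∀ j, N j = ‖(WithLp.equiv 2 (Fin n → ℝ)).symm (fun i => ((j i : ℤ):ℝ))‖ := by
      intro j
      rw [hN, EuclideanSpace.norm_eq]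
      congr 1
      refine Finset.sum_congr rfl fun i _ => ?_
      simp [Real.norm_eq_abs, sq_abs]
    intro a b
    rw [keyN a, keyN b, keyN (a+b)]
    have h : (WithLp.equiv 2 (Fin n → ℝ)).symm (fun i => (((a+b) i : ℤ):ℝ)) =
        (WithLp.equiv 2 (Fin n → ℝ)).symm (fun i => ((a i : ℤ):ℝ)) +
        (WithLp.equiv 2 (Fin n → ℝ)).symm (fun i => ((b i : ℤ):ℝ)) := by
      ext i
      simp
    rw [h]
    exact norm_add_le _ _
  have hN'tri : ∀ a b, N' (a + b) ≤ N' a + N' b := by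
    have keyN' : ∀ j, N' j =
        ‖(WithLp.equiv 2 (Fin m → ℝ)).symm (fun i => ((j (Fin.castLE hm i) : ℤ):ℝ))‖ := by
      intro j
      rw [hN', EuclideanSpace.norm_eq]
      congr 1
      refine Finset.sum_congr rfl fun i _ => ?_
      simp [Real.norm_eq_abs, sq_abs]
    intro a b
    rw [keyN' a, keyN' b, keyN' (a+b)]
    have h : (WithLp.equiv 2 (Fin m → ℝ)).symm (fun i => (((a+b) (Fin.castLE hm i) : ℤ):ℝ)) =
        (WithLp.equiv 2 (Fin m → ℝ)).symm (fun i => ((a (Fin.castLE hm i) : ℤ):ℝ)) +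
        (WithLp.equiv 2 (Fin m → ℝ)).symm (fun i => ((b (Fin.castLE hm i) : ℤ):ℝ)) := by
      ext i
      simp
    rw [h]
    exact norm_add_le _ _
  -- the σ weight and its sum S
  set σ : (Fin n → ℤ) → ℝ := fun j => (1 + N j ^ 2) ^ (-p) with hσdef
  have hσ0 : ∀ j, 0 ≤ σ j := fun j => Real.rpow_nonneg (hpos j).le _
  have hS : Summable σ := by
    refine (sumLattice n hn1 (by exact_mod_cast hp)).congr fun j => ?_
    rw [hσdef]
    simp only
    rw [hNsq j]
  set S : ℝ := ∑' j, σ j with hSdef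
  have hS0 : 0 < S :=
    Summable.tsum_pos hS hσ0 0 (Real.rpow_pos_of_pos (hpos 0) _)
  -- the constant
  have hCc : C₀ ^ 2 = 2 ^ (2*p) * (2 * S) := by
    rw [hC₀, mul_pow]
    congr 1
    · rw [sq, ← Real.rpow_add (by norm_num : (0:ℝ) < 2)]
      ring_nf
    · rw [hSdef] at *
      rw [← Real.rpow_natCast ((2 * S) ^ ((1:ℝ)/2)) 2,
        ← Real.rpow_mul (by positivity)]
      norm_num
      rfl
  -- weights c, E and sequences A, B
  set c : (Fin n → ℤ) → ℝ := fun j => (1 + N j ^ 2) ^ (p/2) with hcdef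
  set E : (Fin n → ℤ) → ℝ := fun j => Real.exp (τ * N' j) with hEdef
  have hc1 : ∀ j, 1 ≤ c j := fun j => Real.one_le_rpow (hone j) (by positivity)
  have hc0 : ∀ j, 0 < c j := fun j => lt_of_lt_of_le one_pos (hc1 j)
  have hE1 : ∀ j, 1 ≤ E j := fun j => Real.one_le_exp (mul_nonneg hτ (hN'0 j))
  have hE0 : ∀ j, 0 < E j := fun j => lt_of_lt_of_le one_pos (hE1 j)
  have hcsq : ∀ j, c j ^ 2 = (1 + N j ^ 2) ^ p := fun j => by
    rw [hcdef]
    simp only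
    rw [sq, ← Real.rpow_add (hpos j)]
    ring_nf
  have hEsq : ∀ j, E j ^ 2 = Real.exp (2*τ*N' j) := fun j => by
    rw [hEdef]
    simp only
    rw [sq, ← Real.exp_add]
    ring_nf
  have hgen : ∀ (t : ℝ) j, t ^ 2 * (1 + N j ^ 2) ^ p * Real.exp (2*τ*N' j)
      = (t * c j * E j) ^ 2 := fun t j => by
    rw [mul_pow, mul_pow, hcsq, hEsq]
  set A : (Fin n → ℤ) → ℝ := fun j => ‖u j‖ * c j * E j with hAdef
  set B : (Fin n → ℤ) → ℝ := fun j => ‖v j‖ * c j * E j with hBdef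
  have hA0 : ∀ j, 0 ≤ A j := fun j =>
    mul_nonneg (mul_nonneg (norm_nonneg _) (hc0 j).le) (hE0 j).le
  have hB0 : ∀ j, 0 ≤ B j := fun j =>
    mul_nonneg (mul_nonneg (norm_nonneg _) (hc0 j).le) (hE0 j).le
  have hA : Summable fun j => A j ^ 2 := hu.congr fun j => hgen (‖u j‖) j
  have hB : Summable fun j => B j ^ 2 := hv.congr fun j => hgen (‖v j‖) j
  set X : ℝ := ∑' j, A j ^ 2 with hXdef
  set Y : ℝ := ∑' j, B j ^ 2 with hYdef
  have hXeq : (∑' j, ‖u j‖ ^ 2 * (1 + N j ^ 2) ^ p * Real.exp (2*τ*N' j)) = X :=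
    tsum_congr fun j => hgen (‖u j‖) j
  have hYeq : (∑' j, ‖v j‖ ^ 2 * (1 + N j ^ 2) ^ p * Real.exp (2*τ*N' j)) = Y :=
    tsum_congr fun j => hgen (‖v j‖) j
  -- weight and exp splitting
  have hzkey : ∀ a b, (1 + N (a+b) ^ 2) ^ p ≤ 2 ^ (2*p) * ((1 + N a ^ 2) ^ p + (1 + N b ^ 2) ^ p) := by
    intro a b
    refine rpow_split hp0.le (hpos a) (hpos b) (hpos (a+b)).le ?_
    have h1 := mul_self_le_mul_self (hN0 (a+b)) (hNtri a b)
    nlinarith [hN0 a, hN0 b, sq_nonneg (N a - N b), h1]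
  have hratio : ∀ a b, (1 + N (a+b) ^ 2) ^ p * σ a * σ b ≤ 2 ^ (2*p) * (σ a + σ b) := by
    intro a b
    have hxa : (0:ℝ) < (1 + N a ^ 2) ^ p := Real.rpow_pos_of_pos (hpos a) _
    have hxb : (0:ℝ) < (1 + N b ^ 2) ^ p := Real.rpow_pos_of_pos (hpos b) _
    have hσa : σ a = ((1 + N a ^ 2) ^ p)⁻¹ := by
      rw [hσdef]; simp only; rw [Real.rpow_neg (hpos a).le]
    have hσb : σ b = ((1 + N b ^ 2) ^ p)⁻¹ := by
      rw [hσdef]; simp only; rw [Real.rpow_neg (hpos b).le]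
    rw [hσa, hσb]
    have h2 : 2 ^ (2*p) * (((1 + N a ^ 2) ^ p)⁻¹ + ((1 + N b ^ 2) ^ p)⁻¹)
        = 2 ^ (2*p) * ((1 + N a ^ 2) ^ p + (1 + N b ^ 2) ^ p)
          * ((1 + N a ^ 2) ^ p)⁻¹ * ((1 + N b ^ 2) ^ p)⁻¹ := by
      field_simp
      ring
    rw [h2]
    exact mul_le_mul_of_nonneg_right
      (mul_le_mul_of_nonneg_right (hzkey a b) (inv_nonneg.2 hxa.le)) (inv_nonneg.2 hxb.le)
  have hEtri : ∀ a b, E (a+b) ≤ E a * E b := by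
    intro a b
    rw [hEdef]
    simp only
    rw [← Real.exp_add]
    refine Real.exp_le_exp.2 ?_
    have h := mul_le_mul_of_nonneg_left (hN'tri a b) hτ
    linarith [h]
  -- product summability
  have hABprod : Summable (fun q : (Fin n → ℤ) × (Fin n → ℤ) => A q.1 ^ 2 * B q.2 ^ 2) :=
    Summable.mul_of_nonneg hA hB (fun k => sq_nonneg _) (fun k => sq_nonneg _)
  let e2 : ((Fin n → ℤ) × (Fin n → ℤ)) ≃ ((Fin n → ℤ) × (Fin n → ℤ)) :=
    ⟨fun q => (q.1 + q.2, q.1), fun q => (q.2, q.1 - q.2),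
      fun q => by simp, fun q => by simp⟩
  have hF : Summable (fun q : (Fin n → ℤ) × (Fin n → ℤ) => A q.2 ^ 2 * B (q.1 - q.2) ^ 2) := by
    rw [← e2.summable_iff]
    refine hABprod.congr fun q => ?_
    simp [e2]
  set G : (Fin n → ℤ) → ℝ := fun j => ∑' k, A k ^ 2 * B (j - k) ^ 2 with hGdef
  have hGsum : Summable G :=
    (hF.hasSum.prod_fiberwise (fun b => (hF.prod_factor b).hasSum)).summable
  have hG0 : ∀ j, 0 ≤ G j := fun j => tsum_nonneg fun k =>
    mul_nonneg (sq_nonneg _) (sq_nonneg _)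
  have hGXY : ∑' j, G j = X * Y := by
    have h1 : ∑' j, G j = ∑' q : (Fin n → ℤ) × (Fin n → ℤ), A q.2 ^ 2 * B (q.1 - q.2) ^ 2 :=
      (Summable.tsum_prod' hF hF.prod_factor).symm
    have h2 : ∑' q : (Fin n → ℤ) × (Fin n → ℤ), A q.2 ^ 2 * B (q.1 - q.2) ^ 2
        = ∑' q : (Fin n → ℤ) × (Fin n → ℤ), A q.1 ^ 2 * B q.2 ^ 2 := by
      rw [← e2.tsum_eq (fun q => A q.2 ^ 2 * B (q.1 - q.2) ^ 2)]
      refine tsum_congr fun q => ?_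
      simp [e2]
    rw [h1, h2]
    rw [Summable.tsum_prod' hABprod (fun k => hB.mul_left (A k ^ 2))]
    have h3 : ∀ b : Fin n → ℤ, ∑' l, A b ^ 2 * B l ^ 2 = A b ^ 2 * ∑' l, B l ^ 2 :=
      fun b => tsum_mul_left
    rw [tsum_congr h3, tsum_mul_right]
  -- the key pointwise estimate
  have key : ∀ j, ‖w j‖ ^ 2 * (1 + N j ^ 2) ^ p * Real.exp (2*τ*N' j)
      ≤ 2 ^ (2*p) * (2 * S) * G j := by
    intro j
    have hBshift : Summable fun k => B (j - k) ^ 2 := by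
      refine ((Equiv.subLeft j).summable_iff).2 hB
    have hσshift : Summable fun k => σ (j - k) :=
      ((Equiv.subLeft j).summable_iff).2 hS
    have hAB : Summable fun k => A k ^ 2 * B (j - k) ^ 2 := hF.prod_factor j
    -- η : the exp-weighted convolution term
    set η : (Fin n → ℤ) → ℝ := fun k => ‖u k‖ * ‖v (j - k)‖ * (E k * E (j - k)) with hηdef
    have hη0 : ∀ k, 0 ≤ η k := fun k =>
      mul_nonneg (mul_nonneg (norm_nonneg _) (norm_nonneg _))
        (mul_nonneg (hE0 k).le (hE0 _).le)
    have hηle : ∀ k, η k ≤ (A k ^ 2 + B (j - k) ^ 2) / 2 := by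
      intro k
      have h1 : η k ≤ A k * B (j - k) := by
        have hcc : (1:ℝ) ≤ c k * c (j - k) := by nlinarith [hc1 k, hc1 (j - k)]
        calc η k = ‖u k‖ * ‖v (j - k)‖ * (E k * E (j - k)) * 1 := by
              rw [hηdef]; ring
          _ ≤ ‖u k‖ * ‖v (j - k)‖ * (E k * E (j - k)) * (c k * c (j - k)) := by
              refine mul_le_mul_of_nonneg_left hcc ?_
              exact mul_nonneg (mul_nonneg (norm_nonneg _) (norm_nonneg _))
                (mul_nonneg (hE0 k).le (hE0 _).le)
          _ = A k * B (j - k) := by rw [hAdef, hBdef]; ring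
      nlinarith [sq_nonneg (A k - B (j - k))]
    have hη : Summable η := by
      refine Summable.of_nonneg_of_le hη0 hηle ?_
      exact (hA.add hBshift).div_const 2
    have huvle : ∀ k, ‖u k‖ * ‖v (j - k)‖ ≤ η k := by
      intro k
      have hEE : (1:ℝ) ≤ E k * E (j - k) := by nlinarith [hE1 k, hE1 (j - k)]
      calc ‖u k‖ * ‖v (j - k)‖ = ‖u k‖ * ‖v (j - k)‖ * 1 := by ring
        _ ≤ ‖u k‖ * ‖v (j - k)‖ * (E k * E (j - k)) := by
            refine mul_le_mul_of_nonneg_left hEE ?_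
            exact mul_nonneg (norm_nonneg _) (norm_nonneg _)
        _ = η k := by rw [hηdef]
    have huv : Summable fun k => ‖u k‖ * ‖v (j - k)‖ :=
      Summable.of_nonneg_of_le (fun k => mul_nonneg (norm_nonneg _) (norm_nonneg _))
        huvle hη
    -- step 1
    have hw1 : ‖w j‖ ≤ ∑' k, ‖u k‖ * ‖v (j - k)‖ := by
      rw [hw j]
      have hsn : Summable fun k => ‖u k * v (j - k)‖ :=
        huv.congr fun k => (norm_mul _ _).symm
      refine (norm_tsum_le_tsum_norm hsn).trans_eq (tsum_congr fun k => norm_mul _ _)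
    -- step 2
    set Φ : ℝ := ∑' k, η k with hΦdef
    have hw2 : ‖w j‖ * E j ≤ Φ := by
      calc ‖w j‖ * E j ≤ (∑' k, ‖u k‖ * ‖v (j - k)‖) * E j :=
            mul_le_mul_of_nonneg_right hw1 (hE0 j).le
        _ = ∑' k, ‖u k‖ * ‖v (j - k)‖ * E j := tsum_mul_right.symm
        _ ≤ Φ := by
            refine Summable.tsum_le_tsum (fun k => ?_) (huv.mul_right _) hη
            have hEj : E j ≤ E k * E (j - k) := by
              have hjeq : j = k + (j - k) := by abel
              calc E j = E (k + (j - k)) := by rw [← hjeq]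
                _ ≤ E k * E (j - k) := hEtri k (j - k)
            exact mul_le_mul_of_nonneg_left hEj
              (mul_nonneg (norm_nonneg _) (norm_nonneg _))
    -- step 3 : Cauchy-Schwarz
    set r : (Fin n → ℤ) → ℝ := fun k => c j * (c k)⁻¹ * (c (j - k))⁻¹ with hrdef
    set f : (Fin n → ℤ) → ℝ := fun k => A k * B (j - k) with hfdef
    have hr0 : ∀ k, 0 ≤ r k := fun k => by
      have := hc0 j; have := hc0 k; have := hc0 (j - k); positivity
    have hf0 : ∀ k, 0 ≤ f k := fun k => mul_nonneg (hA0 k) (hB0 _)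
    have hfr : ∀ k, η k * c j = f k * r k := by
      intro k
      rw [hηdef, hfdef, hrdef, hAdef, hBdef]
      simp only
      field_simp [(hc0 k).ne', (hc0 (j - k)).ne']
    have hf2 : Summable fun k => f k ^ 2 := hAB.congr fun k => (mul_pow _ _ _).symm
    have hr2eq : ∀ k, r k ^ 2 = (1 + N j ^ 2) ^ p * σ k * σ (j - k) := by
      intro k
      rw [hrdef]
      simp only
      rw [mul_pow, mul_pow, inv_pow, inv_pow, hcsq, hcsq, hcsq]
      rw [hσdef]
      simp only
      rw [Real.rpow_neg (hpos k).le, Real.rpow_neg (hpos (j - k)).le]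
    have hr2le : ∀ k, r k ^ 2 ≤ 2 ^ (2*p) * (σ k + σ (j - k)) := by
      intro k
      rw [hr2eq k]
      have hjeq : k + (j - k) = j := by abel
      have := hratio k (j - k)
      rw [hjeq] at this
      exact this
    have hr2 : Summable fun k => r k ^ 2 :=
      Summable.of_nonneg_of_le (fun k => sq_nonneg _) hr2le ((hS.add hσshift).mul_left _)
    have hfr_sum : Summable fun k => f k * r k :=
      (hη.mul_right (c j)).congr hfr
    have hΦc : Φ * c j = ∑' k, f k * r k := by
      rw [hΦdef, ← tsum_mul_right]
      exact tsum_congr hfr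
    have hCS : (Φ * c j) ^ 2 ≤ G j * ∑' k, r k ^ 2 := by
      rw [hΦc, hGdef]
      have := tsum_CS f r hf0 hr0 hf2 hr2 hfr_sum
      refine this.trans ?_
      refine le_of_eq ?_
      congr 1
      exact tsum_congr fun k => mul_pow _ _ _
    have hr2sum : (∑' k, r k ^ 2) ≤ 2 ^ (2*p) * (2 * S) := by
      have h1 : (∑' k, r k ^ 2) ≤ ∑' k, 2 ^ (2*p) * (σ k + σ (j - k)) :=
        Summable.tsum_le_tsum hr2le hr2 ((hS.add hσshift).mul_left _)
      have h2 : ∑' k, 2 ^ (2*p) * (σ k + σ (j - k)) = 2 ^ (2*p) * (S + S) := by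
        rw [tsum_mul_left, Summable.tsum_add hS hσshift, hSdef]
        congr 2
        exact ((Equiv.subLeft j).tsum_eq σ)
      rw [h2] at h1
      refine h1.trans_eq (by ring)
    -- combine
    have hΦ0 : 0 ≤ Φ := tsum_nonneg hη0
    calc ‖w j‖ ^ 2 * (1 + N j ^ 2) ^ p * Real.exp (2*τ*N' j)
        = (‖w j‖ * c j * E j) ^ 2 := hgen _ j
      _ = ((‖w j‖ * E j) * c j) ^ 2 := by ring_nf
      _ ≤ (Φ * c j) ^ 2 := by
          refine pow_le_pow_left₀ (mul_nonneg (mul_nonneg (norm_nonneg _) (hE0 j).le) (hc0 j).le)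
            (mul_le_mul_of_nonneg_right hw2 (hc0 j).le) 2
      _ ≤ G j * ∑' k, r k ^ 2 := hCS
      _ ≤ G j * (2 ^ (2*p) * (2 * S)) :=
          mul_le_mul_of_nonneg_left hr2sum (hG0 j)
      _ = 2 ^ (2*p) * (2 * S) * G j := by ring
  -- conclusion
  have hwsum : Summable fun j => ‖w j‖ ^ 2 * (1 + N j ^ 2) ^ p * Real.exp (2*τ*N' j) := by
    refine Summable.of_nonneg_of_le (fun j => ?_) (fun j => key j) (hGsum.mul_left _)
    have := hpos j
    positivity
  refine ⟨hwsum, ?_⟩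
  have hfinal : (∑' j, ‖w j‖ ^ 2 * (1 + N j ^ 2) ^ p * Real.exp (2*τ*N' j))
      ≤ 2 ^ (2*p) * (2 * S) * (X * Y) := by
    calc (∑' j, ‖w j‖ ^ 2 * (1 + N j ^ 2) ^ p * Real.exp (2*τ*N' j))
        ≤ ∑' j, 2 ^ (2*p) * (2 * S) * G j :=
          Summable.tsum_le_tsum key hwsum (hGsum.mul_left _)
      _ = 2 ^ (2*p) * (2 * S) * ∑' j, G j := tsum_mul_left
      _ = 2 ^ (2*p) * (2 * S) * (X * Y) := by rw [hGXY]
  rw [hXeq, hYeq, hCc]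
  linarith [hfinal]
end

section
/- For any integer k ≥ 2, nonnegative sequence (a_j)_{j∈ℤ^n}, and τ ≥ 0, writing G = (∑_j a_j² e^{2τ|j'|})^{1/2}, H = (∑_j a_j²)^{1/2}, and K = (∑_j a_j² |j'|³ e^{2τ|j'|})^{1/2}, one has G^k ≤ 2^{(k−2)/2} ( e^k H^k + τ³ G^{k−2} K² ). -/
private lemma add_rpow_le_two_rpow_mul (u v : ℝ) (hu : 0 ≤ u) (hv : 0 ≤ v) {p : ℝ}
    (hp : 1 ≤ p) : (u + v) ^ p ≤ (2:ℝ) ^ (p-1) * (u ^ p + v ^ p) := by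
  lift u to NNReal using hu
  lift v to NNReal using hv
  exact_mod_cast NNReal.rpow_add_le_mul_rpow_add_rpow u v hp

theorem gevrey_interpolation_pow (n m : ℕ) (hm1 : 1 ≤ m) (hm : m ≤ n) (k : ℕ) (hk : 2 ≤ k)
    (τ : ℝ) (hτ : 0 ≤ τ) (a : (Fin n → ℤ) → ℝ) (ha : ∀ j, 0 ≤ a j)
    (N' : (Fin n → ℤ) → ℝ)
    (hN' : ∀ j, N' j = Real.sqrt (∑ i : Fin m, ((j (Fin.castLE hm i) : ℤ) : ℝ) ^ 2))
    (hG : Summable fun j => a j ^ 2 * Real.exp (2 * τ * N' j))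
    (hH : Summable fun j => a j ^ 2)
    (hK : Summable fun j => a j ^ 2 * N' j ^ 3 * Real.exp (2 * τ * N' j))
    (G H K : ℝ)
    (hGdef : G = (∑' j : Fin n → ℤ, a j ^ 2 * Real.exp (2 * τ * N' j)) ^ ((1 : ℝ) / 2))
    (hHdef : H = (∑' j : Fin n → ℤ, a j ^ 2) ^ ((1 : ℝ) / 2))
    (hKdef : K = (∑' j : Fin n → ℤ, a j ^ 2 * N' j ^ 3 * Real.exp (2 * τ * N' j)) ^ ((1 : ℝ) / 2)) :
    G ^ k ≤ (2 : ℝ) ^ (((k : ℝ) - 2) / 2) *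
      (Real.exp 1 ^ k * H ^ k + τ ^ 3 * G ^ (k - 2) * K ^ 2) := by
  have hN0 : ∀ j, 0 ≤ N' j := fun j => (hN' j) ▸ Real.sqrt_nonneg _
  set E : (Fin n → ℤ) → ℝ := fun j => Real.exp (2 * τ * N' j) with hEdef
  have hE0 : ∀ j, 0 < E j := fun j => Real.exp_pos _
  set SG := ∑' j : Fin n → ℤ, a j ^ 2 * E j with hSGdef
  set SH := ∑' j : Fin n → ℤ, a j ^ 2 with hSHdef
  set SK := ∑' j : Fin n → ℤ, a j ^ 2 * N' j ^ 3 * E j with hSKdef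
  have hSG0 : 0 ≤ SG := tsum_nonneg fun j => mul_nonneg (sq_nonneg _) (hE0 j).le
  have hSH0 : 0 ≤ SH := tsum_nonneg fun j => sq_nonneg _
  have hSK0 : 0 ≤ SK := tsum_nonneg fun j =>
    mul_nonneg (mul_nonneg (sq_nonneg _) (pow_nonneg (hN0 j) 3)) (hE0 j).le
  have hkpos : (0:ℝ) < (k:ℝ) := by positivity
  have hkR : (2:ℝ) ≤ (k:ℝ) := by exact_mod_cast hk
  have hkne : (k:ℝ) ≠ 0 := ne_of_gt hkpos
  set c : ℝ := 6 / (k:ℝ) with hcdef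
  set s : ℝ := ((k:ℝ) - 2) / (k:ℝ) with hsdef
  set t : ℝ := 2 / (k:ℝ) with htdef
  have hc0 : 0 < c := by positivity
  -- pointwise exponential bound
  have hpt : ∀ x : ℝ, 0 ≤ x → Real.exp (2 * x) ≤ Real.exp 2 + x ^ c * Real.exp (2 * x) := by
    intro x hx
    rcases le_total x 1 with h1 | h1
    · have h2 : Real.exp (2 * x) ≤ Real.exp 2 := Real.exp_le_exp.2 (by linarith)
      have h3 : 0 ≤ x ^ c * Real.exp (2 * x) :=
        mul_nonneg (Real.rpow_nonneg hx c) (Real.exp_pos _).le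
      linarith
    · have h2 : (1:ℝ) ≤ x ^ c := Real.one_le_rpow h1 hc0.le
      have h3 : 0 < Real.exp (2 * x) := Real.exp_pos _
      have h4 : 0 < Real.exp 2 := Real.exp_pos _
      nlinarith
  set M : (Fin n → ℤ) → ℝ := fun j => a j ^ 2 * N' j ^ c * E j with hMdef
  -- middle estimate via Hölder (or directly for k = 2)
  have hmid : Summable M ∧ (∑' j, M j) ≤ SG ^ s * SK ^ t := by
    rcases eq_or_lt_of_le hk with hk2 | hk3
    · -- k = 2
      have hk2' : k = 2 := hk2.symm
      subst hk2'
      have hMK : ∀ j, M j = a j ^ 2 * N' j ^ 3 * E j := by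
        intro j
        have h3 : N' j ^ c = N' j ^ (3:ℕ) := by
          rw [← Real.rpow_natCast (N' j) 3]
          norm_num [hcdef]
        rw [hMdef]; simp only []; rw [h3]
      constructor
      · exact (summable_congr hMK).2 hK
      · have hts : (∑' j, M j) = SK := by rw [tsum_congr hMK]
        rw [hts]
        have hs' : s = 0 := by norm_num [hsdef]
        have ht' : t = 1 := by norm_num [htdef]
        rw [hs', ht', Real.rpow_zero, Real.rpow_one, one_mul]
    · -- k ≥ 3, genuine Hölder
      have hk2R : (2:ℝ) < (k:ℝ) := by exact_mod_cast hk3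
      have hkm2 : ((k:ℝ) - 2) ≠ 0 := by linarith
      set p : ℝ := (k:ℝ) / ((k:ℝ) - 2) with hpdef
      set q : ℝ := (k:ℝ) / 2 with hqdef
      have hpq : p.HolderConjugate q := by
        rw [Real.holderConjugate_iff]
        constructor
        · rw [hpdef, lt_div_iff₀ (by linarith)]; linarith
        · rw [hpdef, hqdef]; field_simp; ring
      have hf0 : ∀ j, (0:ℝ) ≤ (a j ^ 2 * E j) ^ s := fun j => Real.rpow_nonneg
        (mul_nonneg (sq_nonneg _) (hE0 j).le) s
      have hg0 : ∀ j, (0:ℝ) ≤ (a j ^ 2 * N' j ^ 3 * E j) ^ t := fun j => Real.rpow_nonneg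
        (mul_nonneg (mul_nonneg (sq_nonneg _) (pow_nonneg (hN0 j) 3)) (hE0 j).le) t
      have hsp : s * p = 1 := by rw [hsdef, hpdef]; field_simp
      have htq : t * q = 1 := by rw [htdef, hqdef]; field_simp
      have hfp : ∀ j, ((a j ^ 2 * E j) ^ s) ^ p = a j ^ 2 * E j := fun j => by
        rw [← Real.rpow_mul (mul_nonneg (sq_nonneg _) (hE0 j).le), hsp, Real.rpow_one]
      have hgq : ∀ j, ((a j ^ 2 * N' j ^ 3 * E j) ^ t) ^ q = a j ^ 2 * N' j ^ 3 * E j := fun j => by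
        rw [← Real.rpow_mul (mul_nonneg (mul_nonneg (sq_nonneg _) (pow_nonneg (hN0 j) 3))
          (hE0 j).le), htq, Real.rpow_one]
      have hfsum : Summable (fun j => ((a j ^ 2 * E j) ^ s) ^ p) := (summable_congr hfp).2 hG
      have hgsum : Summable (fun j => ((a j ^ 2 * N' j ^ 3 * E j) ^ t) ^ q) :=
        (summable_congr hgq).2 hK
      obtain ⟨hsum, hle⟩ := Real.summable_and_inner_le_Lp_mul_Lq_tsum_of_nonneg hpq hf0 hg0 hfsum hgsum
      have hFG : ∀ j, (a j ^ 2 * E j) ^ s * (a j ^ 2 * N' j ^ 3 * E j) ^ t = M j := by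
        intro j
        have hA : (0:ℝ) ≤ a j ^ 2 := sq_nonneg _
        have hN3 : (0:ℝ) ≤ N' j ^ 3 := pow_nonneg (hN0 j) 3
        have hst : s + t = 1 := by rw [hsdef, htdef]; field_simp; ring
        have e1 : (a j ^ 2) ^ s * (a j ^ 2) ^ t = a j ^ 2 := by
          rw [← Real.rpow_add' hA (by rw [hst]; norm_num), hst, Real.rpow_one]
        have e2 : (E j) ^ s * (E j) ^ t = E j := by
          rw [← Real.rpow_add (hE0 j), hst, Real.rpow_one]
        have e3 : ((N' j ^ 3 : ℝ)) ^ t = N' j ^ c := by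
          rw [← Real.rpow_natCast (N' j) 3, ← Real.rpow_mul (hN0 j)]
          congr 1
          rw [htdef, hcdef]; push_cast; ring
        calc (a j ^ 2 * E j) ^ s * (a j ^ 2 * N' j ^ 3 * E j) ^ t
            = ((a j ^ 2) ^ s * (a j ^ 2) ^ t) * ((E j) ^ s * (E j) ^ t) * ((N' j ^ 3) ^ t) := by
              rw [Real.mul_rpow hA (hE0 j).le, Real.mul_rpow (mul_nonneg hA hN3) (hE0 j).le,
                Real.mul_rpow hA hN3]; ring
          _ = M j := by simp only [e1, e2, e3, hMdef]; ring
      refine ⟨(summable_congr hFG).1 hsum, ?_⟩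
      have h1 : (∑' j, ((a j ^ 2 * E j) ^ s) ^ p) = SG := tsum_congr hfp
      have h2 : (∑' j, ((a j ^ 2 * N' j ^ 3 * E j) ^ t) ^ q) = SK := tsum_congr hgq
      have h3 : (∑' j, (a j ^ 2 * E j) ^ s * (a j ^ 2 * N' j ^ 3 * E j) ^ t) = ∑' j, M j :=
        tsum_congr hFG
      rw [h3, h1, h2] at hle
      have hps : (1:ℝ)/p = s := by rw [hpdef, hsdef, one_div_div]
      have hqt : (1:ℝ)/q = t := by rw [hqdef, htdef, one_div_div]
      rwa [hps, hqt] at hle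
  obtain ⟨hMsum, hMle⟩ := hmid
  have hτc : (0:ℝ) ≤ τ ^ c := Real.rpow_nonneg hτ c
  -- key inequality on SG
  have hptj : ∀ j, a j ^ 2 * E j ≤ a j ^ 2 * Real.exp 2 + τ ^ c * M j := by
    intro j
    have hE : E j = Real.exp (2 * (τ * N' j)) := by rw [hEdef]; simp only []; congr 1; ring
    have hx := hpt (τ * N' j) (mul_nonneg hτ (hN0 j))
    rw [← hE] at hx
    have hb := mul_le_mul_of_nonneg_left hx (sq_nonneg (a j))
    calc a j ^ 2 * E j ≤ a j ^ 2 * (Real.exp 2 + (τ * N' j) ^ c * E j) := hb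
      _ = a j ^ 2 * Real.exp 2 + τ ^ c * M j := by
          rw [Real.mul_rpow hτ (hN0 j), hMdef]; simp only []; ring
  have hkey : SG ≤ Real.exp 2 * SH + τ ^ c * (SG ^ s * SK ^ t) := by
    have hrs : Summable (fun j => a j ^ 2 * Real.exp 2 + τ ^ c * M j) :=
      (hH.mul_right _).add (hMsum.mul_left _)
    have h1 : SG ≤ ∑' j, (a j ^ 2 * Real.exp 2 + τ ^ c * M j) := Summable.tsum_le_tsum hptj hG hrs
    rw [Summable.tsum_add (hH.mul_right _) (hMsum.mul_left _), tsum_mul_left, tsum_mul_right] at h1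
    have h2 : τ ^ c * (∑' j, M j) ≤ τ ^ c * (SG ^ s * SK ^ t) :=
      mul_le_mul_of_nonneg_left hMle hτc
    calc SG ≤ SH * Real.exp 2 + τ ^ c * ∑' j, M j := h1
      _ ≤ Real.exp 2 * SH + τ ^ c * (SG ^ s * SK ^ t) := by rw [mul_comm SH]; linarith
  -- raise to power k/2
  have hq1 : (1:ℝ) ≤ (k:ℝ)/2 := by linarith
  have step : SG ^ ((k:ℝ)/2) ≤ (Real.exp 2 * SH + τ ^ c * (SG ^ s * SK ^ t)) ^ ((k:ℝ)/2) :=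
    Real.rpow_le_rpow hSG0 hkey (by positivity)
  have hv0 : (0:ℝ) ≤ τ ^ c * (SG ^ s * SK ^ t) :=
    mul_nonneg hτc (mul_nonneg (Real.rpow_nonneg hSG0 s) (Real.rpow_nonneg hSK0 t))
  have step2 := add_rpow_le_two_rpow_mul (Real.exp 2 * SH) (τ ^ c * (SG ^ s * SK ^ t))
    (mul_nonneg (Real.exp_pos 2).le hSH0) hv0 hq1
  -- identify the pieces
  have hGk : G ^ k = SG ^ ((k:ℝ)/2) := by
    rw [hGdef, ← Real.rpow_natCast (SG ^ ((1:ℝ)/2)) k, ← Real.rpow_mul hSG0]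
    congr 1; ring
  have A1 : (Real.exp 2 * SH) ^ ((k:ℝ)/2) = Real.exp 1 ^ k * H ^ k := by
    rw [Real.mul_rpow (Real.exp_pos 2).le hSH0]
    congr 1
    · rw [← Real.exp_one_rpow 2, ← Real.rpow_mul (Real.exp_pos 1).le,
        ← Real.rpow_natCast (Real.exp 1) k]
      congr 1; ring
    · rw [hHdef, ← Real.rpow_natCast (SH ^ ((1:ℝ)/2)) k, ← Real.rpow_mul hSH0]
      congr 1; ring
  have A2 : (τ ^ c * (SG ^ s * SK ^ t)) ^ ((k:ℝ)/2) = τ ^ 3 * G ^ (k - 2) * K ^ 2 := by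
    rw [Real.mul_rpow hτc (mul_nonneg (Real.rpow_nonneg hSG0 s) (Real.rpow_nonneg hSK0 t)),
      Real.mul_rpow (Real.rpow_nonneg hSG0 s) (Real.rpow_nonneg hSK0 t),
      ← Real.rpow_mul hτ, ← Real.rpow_mul hSG0, ← Real.rpow_mul hSK0]
    have eτ : c * ((k:ℝ)/2) = ((3:ℕ):ℝ) := by rw [hcdef]; push_cast; field_simp; ring
    have eG : s * ((k:ℝ)/2) = ((1:ℝ)/2) * ((k - 2 : ℕ):ℝ) := by
      rw [hsdef, Nat.cast_sub hk]; push_cast; field_simp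
    have eK : t * ((k:ℝ)/2) = 1 := by rw [htdef]; field_simp
    have eG2 : SG ^ ((1:ℝ)/2 * ((k - 2 : ℕ):ℝ)) = G ^ (k - 2) := by
      rw [hGdef, ← Real.rpow_natCast (SG ^ ((1:ℝ)/2)) (k-2), ← Real.rpow_mul hSG0]
    have eK2 : SK = K ^ 2 := by
      rw [hKdef, ← Real.rpow_natCast (SK ^ ((1:ℝ)/2)) 2, ← Real.rpow_mul hSK0]
      norm_num
    rw [eτ, eG, eK, Real.rpow_natCast, Real.rpow_one, eG2, eK2]
    ring
  have h2exp : ((k:ℝ)/2 - 1) = ((k:ℝ) - 2)/2 := by ring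
  rw [h2exp, A1, A2] at step2
  rw [hGk]
  exact le_trans step step2
end
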